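/- Let G be a finite abelian group, let K be uniformly distributed on G, and let (K′, S) be a pair of random variables (K′ taking values in G, S taking values in a finite set) independent of K. Then I(K; S, K + K′) = log|G| − H(K′ | S) ≤ log|G| − H(K′) + I(K′; S). -/
import Mathlib


open MeasureTheory

/-- `prob μ X x = P[X = x]`. -/
noncomputable def prob {Ω : Type*} [MeasurableSpace Ω] (μ : Measure Ω)
    {α : Type*} (X : Ω → α) (x : α) : ℝ :=
  (μ (X ⁻¹' {x})).toReal

/-- Shannon entropy (in bits) of a random variable with values in a finite set. -/
noncomputable def ent {Ω : Type*} [MeasurableSpace Ω] (μ : Measure Ω)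
    {α : Type*} [Fintype α] (X : Ω → α) : ℝ :=
  ∑ x : α, -(prob μ X x * Real.logb 2 (prob μ X x))

/-- Conditional entropy `H(X | Y)` in bits. -/
noncomputable def condEnt {Ω : Type*} [MeasurableSpace Ω] (μ : Measure Ω)
    {α β : Type*} [Fintype α] [Fintype β] (X : Ω → α) (Y : Ω → β) : ℝ :=
  ent μ (fun ω => (X ω, Y ω)) - ent μ Y

/-- Mutual information `I(X; Y)` in bits. -/
noncomputable def mutInf {Ω : Type*} [MeasurableSpace Ω] (μ : Measure Ω)
    {α β : Type*} [Fintype α] [Fintype β] (X : Ω → α) (Y : Ω → β) : ℝ :=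
  ent μ X + ent μ Y - ent μ (fun ω => (X ω, Y ω))

/-- Conditional mutual information `I(X; Y | Z)` in bits. -/
noncomputable def condMutInf {Ω : Type*} [MeasurableSpace Ω] (μ : Measure Ω)
    {α β γ : Type*} [Fintype α] [Fintype β] [Fintype γ]
    (X : Ω → α) (Y : Ω → β) (Z : Ω → γ) : ℝ :=
  condEnt μ X Z - condEnt μ X (fun ω => (Y ω, Z ω))

/-- `X` and `Y` are conditionally independent given `Z`:
`P[X=x, Y=y, Z=z] · P[Z=z] = P[X=x, Z=z] · P[Y=y, Z=z]` for all values. -/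
def CondIndepRV {Ω : Type*} [MeasurableSpace Ω] (μ : Measure Ω)
    {α β γ : Type*} (X : Ω → α) (Y : Ω → β) (Z : Ω → γ) : Prop :=
  ∀ (x : α) (y : β) (z : γ),
    prob μ (fun ω => ((X ω, Y ω), Z ω)) ((x, y), z) * prob μ Z z =
      prob μ (fun ω => (X ω, Z ω)) (x, z) * prob μ (fun ω => (Y ω, Z ω)) (y, z)

lemma prob_marginal {Ω α β : Type*} [MeasurableSpace Ω] (μ : Measure Ω) [IsProbabilityMeasure μ]
    [Fintype β] (X : Ω → α) (Y : Ω → β) (x : α)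
    (h : ∀ y, MeasurableSet ((fun ω => (X ω, Y ω)) ⁻¹' {(x, y)})) :
    prob μ X x = ∑ y, prob μ (fun ω => (X ω, Y ω)) (x, y) := by
  have hu : X ⁻¹' {x} = ⋃ y, (fun ω => (X ω, Y ω)) ⁻¹' {(x, y)} := by
    ext ω; simp [Prod.ext_iff]
  have hd : Pairwise (Function.onFun Disjoint fun y => (fun ω => (X ω, Y ω)) ⁻¹' {(x, y)}) := by
    intro a b hab
    simp only [Function.onFun, Set.disjoint_left]
    intro ω ha hb
    apply hab
    simp only [Set.mem_preimage, Set.mem_singleton_iff, Prod.mk.injEq] at ha hb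
    rw [← ha.2, hb.2]
  unfold prob
  rw [hu, measure_iUnion hd h, tsum_fintype, ENNReal.toReal_sum (fun y _ => measure_ne_top μ _)]

lemma sum_prob {Ω α : Type*} [MeasurableSpace Ω] (μ : Measure Ω) [IsProbabilityMeasure μ]
    [Fintype α] (X : Ω → α) (h : ∀ x, MeasurableSet (X ⁻¹' {x})) :
    ∑ x, prob μ X x = 1 := by
  have hu : (Set.univ : Set Ω) = ⋃ x, X ⁻¹' {x} := by ext ω; simp
  have hd : Pairwise (Function.onFun Disjoint fun x => X ⁻¹' {x}) := by
    intro a b hab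
    simp only [Function.onFun, Set.disjoint_left]
    intro ω ha hb
    apply hab
    simp only [Set.mem_preimage, Set.mem_singleton_iff] at ha hb
    rw [← ha, hb]
  have := measure_iUnion (μ := μ) hd h
  rw [← hu, measure_univ, tsum_fintype] at this
  unfold prob
  rw [← ENNReal.toReal_sum (fun y _ => measure_ne_top μ _), ← this]
  simp

lemma phi_scale (n q : ℝ) (hn : 1 ≤ n) (hq : 0 ≤ q) :
    -((1/n*q) * Real.logb 2 (1/n*q)) = (1/n)*q*Real.logb 2 n + (1/n) * -(q * Real.logb 2 q) := by
  have hn0 : (0:ℝ) < n := lt_of_lt_of_le one_pos hn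
  rcases eq_or_lt_of_le hq with h | h
  · simp [← h]
  · rw [Real.logb_mul (by positivity) (ne_of_gt h), one_div, Real.logb_inv]
    ring

/-- One-time-padding secrecy bound: if `K` is uniform on a finite abelian group `G` and
independent of `(K′, S)`, then
`I(K; S, K + K′) = log|G| − H(K′|S) ≤ log|G| − H(K′) + I(K′; S)`. -/
theorem stmt17 {Ω G 𝒮 : Type*} [MeasurableSpace Ω]
    (μ : Measure Ω) [IsProbabilityMeasure μ]
    [Fintype G] [AddCommGroup G] [Fintype 𝒮]
    [MeasurableSpace G] [MeasurableSingletonClass G]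
    [MeasurableSpace 𝒮] [MeasurableSingletonClass 𝒮]
    (K K' : Ω → G) (S : Ω → 𝒮)
    (hK : Measurable K) (hK' : Measurable K') (hS : Measurable S)
    (hunif : ∀ g : G, prob μ K g = 1 / Fintype.card G)
    (hindep : ∀ (g k' : G) (s : 𝒮),
      prob μ (fun ω => (K ω, K' ω, S ω)) (g, k', s) =
        prob μ K g * prob μ (fun ω => (K' ω, S ω)) (k', s)) :
    mutInf μ K (fun ω => (S ω, K ω + K' ω)) =
        Real.logb 2 (Fintype.card G) - condEnt μ K' S ∧
    mutInf μ K (fun ω => (S ω, K ω + K' ω)) ≤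
        Real.logb 2 (Fintype.card G) - ent μ K' + mutInf μ K' S := by
  classical
  set n : ℝ := (Fintype.card G : ℝ) with hn
  have hn1 : (1:ℝ) ≤ n := by
    rw [hn]; exact_mod_cast Fintype.card_pos (α := G)
  have hn0 : (0:ℝ) < n := lt_of_lt_of_le one_pos hn1
  set q : G → 𝒮 → ℝ := fun k' s => prob μ (fun ω => (K' ω, S ω)) (k', s) with hqdef
  have hq : ∀ k' s, prob μ (fun ω => (K' ω, S ω)) (k', s) = q k' s := fun _ _ => rfl
  have hq0 : ∀ k' s, 0 ≤ q k' s := fun _ _ => ENNReal.toReal_nonneg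
  have hiff : ∀ (ω : Ω) (g m : G) (s : 𝒮),
      (K ω = g ∧ S ω = s ∧ K ω + K' ω = m) ↔ (K ω = g ∧ K' ω = m - g ∧ S ω = s) := by
    intro ω g m s
    constructor
    · rintro ⟨h1, h2, h3⟩
      refine ⟨h1, ?_, h2⟩
      rw [eq_sub_iff_add_eq', ← h1]; exact h3
    · rintro ⟨h1, h2, h3⟩
      refine ⟨h1, h3, ?_⟩
      rw [h1, h2]; abel
  have hmeas3 : ∀ (g k' : G) (s : 𝒮),
      MeasurableSet ((fun ω => (K ω, K' ω, S ω)) ⁻¹' {(g, k', s)}) := by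
    intro g k' s
    have h : (fun ω => (K ω, K' ω, S ω)) ⁻¹' {(g, k', s)}
        = K ⁻¹' {g} ∩ (K' ⁻¹' {k'} ∩ S ⁻¹' {s}) := by
      ext ω; simp [Prod.ext_iff]
    rw [h]
    exact (hK (measurableSet_singleton _)).inter
      ((hK' (measurableSet_singleton _)).inter (hS (measurableSet_singleton _)))
  have hmeas2 : ∀ (k' : G) (s : 𝒮),
      MeasurableSet ((fun ω => (K' ω, S ω)) ⁻¹' {(k', s)}) := by
    intro k' s
    have h : (fun ω => (K' ω, S ω)) ⁻¹' {(k', s)} = K' ⁻¹' {k'} ∩ S ⁻¹' {s} := by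
      ext ω; simp [Prod.ext_iff]
    rw [h]
    exact (hK' (measurableSet_singleton _)).inter (hS (measurableSet_singleton _))
  have hsetJ : ∀ (g m : G) (s : 𝒮),
      ((fun ω => (K ω, (S ω, K ω + K' ω))) ⁻¹' {(g, (s, m))})
        = (fun ω => (K ω, K' ω, S ω)) ⁻¹' {(g, m - g, s)} := by
    intro g m s
    ext ω
    simp only [Set.mem_preimage, Set.mem_singleton_iff, Prod.mk.injEq]
    exact hiff ω g m s
  have hJ : ∀ (g m : G) (s : 𝒮),
      prob μ (fun ω => (K ω, (S ω, K ω + K' ω))) (g, (s, m)) = 1/n * q (m - g) s := by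
    intro g m s
    have h : prob μ (fun ω => (K ω, (S ω, K ω + K' ω))) (g, (s, m))
        = prob μ (fun ω => (K ω, K' ω, S ω)) (g, m - g, s) := by
      unfold prob; rw [hsetJ]
    rw [h, hindep, hunif, hq]
  have hsetP : ∀ (g m : G) (s : 𝒮),
      ((fun ω => ((S ω, K ω + K' ω), K ω)) ⁻¹' {((s, m), g)})
        = (fun ω => (K ω, K' ω, S ω)) ⁻¹' {(g, m - g, s)} := by
    intro g m s
    ext ω
    simp only [Set.mem_preimage, Set.mem_singleton_iff, Prod.mk.injEq]
    rw [← hiff ω g m s]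
    tauto
  have hSM : ∀ (s : 𝒮) (m : G),
      prob μ (fun ω => (S ω, K ω + K' ω)) (s, m) = 1/n * ∑ k', q k' s := by
    intro s m
    rw [prob_marginal μ _ K (s, m) (fun g => by rw [hsetP g m s]; exact hmeas3 _ _ _)]
    have h1 : ∀ g : G, prob μ (fun ω => ((S ω, K ω + K' ω), K ω)) ((s, m), g)
        = 1/n * q (m - g) s := by
      intro g
      have h2 : prob μ (fun ω => ((S ω, K ω + K' ω), K ω)) ((s, m), g)
          = prob μ (fun ω => (K ω, K' ω, S ω)) (g, m - g, s) := by
        unfold prob; rw [hsetP]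
      rw [h2, hindep, hunif, hq]
    rw [Finset.sum_congr rfl (fun g _ => h1 g), ← Finset.mul_sum]
    congr 1
    exact Fintype.sum_equiv (Equiv.subLeft m) (fun g => q (m - g) s) (fun k => q k s)
      (fun g => rfl)
  have hsetS : ∀ (s : 𝒮) (k' : G),
      ((fun ω => (S ω, K' ω)) ⁻¹' {(s, k')}) = (fun ω => (K' ω, S ω)) ⁻¹' {(k', s)} := by
    intro s k'
    ext ω
    simp only [Set.mem_preimage, Set.mem_singleton_iff, Prod.mk.injEq]
    tauto
  have hSs : ∀ s : 𝒮, prob μ S s = ∑ k', q k' s := by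
    intro s
    rw [prob_marginal μ S K' s (fun k' => by rw [hsetS s k']; exact hmeas2 _ _)]
    refine Finset.sum_congr rfl (fun k' _ => ?_)
    rw [← hq]
    unfold prob; rw [hsetS]
  have hsum1 : ∑ s : 𝒮, ∑ k' : G, q k' s = 1 := by
    have h := sum_prob μ (fun ω => (K' ω, S ω)) (fun v => by
      obtain ⟨k', s⟩ := v; exact hmeas2 k' s)
    rw [Fintype.sum_prod_type] at h
    rw [Finset.sum_comm]
    exact h
  have entK : ent μ K = Real.logb 2 n := by
    unfold ent
    rw [Finset.sum_congr rfl (fun g _ => by rw [hunif g])]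
    rw [Finset.sum_const, Finset.card_univ, nsmul_eq_mul, ← hn, one_div, Real.logb_inv]
    field_simp
  have entSM : ent μ (fun ω => (S ω, K ω + K' ω)) = Real.logb 2 n + ent μ S := by
    unfold ent
    rw [Fintype.sum_prod_type]
    have step : ∀ s : 𝒮, (∑ m : G, -(prob μ (fun ω => (S ω, K ω + K' ω)) (s, m) *
        Real.logb 2 (prob μ (fun ω => (S ω, K ω + K' ω)) (s, m))))
        = (∑ k', q k' s) * Real.logb 2 n + -((∑ k', q k' s) * Real.logb 2 (∑ k', q k' s)) := by
      intro s
      have hps : 0 ≤ ∑ k', q k' s := Finset.sum_nonneg fun _ _ => hq0 _ _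
      rw [Finset.sum_congr rfl (fun m _ => by rw [hSM s m, phi_scale n _ hn1 hps])]
      rw [Finset.sum_const, Finset.card_univ, nsmul_eq_mul, ← hn]
      field_simp
    rw [Finset.sum_congr rfl (fun s _ => step s)]
    rw [Finset.sum_add_distrib, ← Finset.sum_mul, hsum1, one_mul]
    congr 1
    exact (Finset.sum_congr rfl (fun s _ => by rw [hSs s])).symm
  have entJ : ent μ (fun ω => (K ω, (S ω, K ω + K' ω))) = Real.logb 2 n +
      ent μ (fun ω => (K' ω, S ω)) := by
    unfold ent
    rw [Fintype.sum_prod_type]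
    have step : ∀ g : G, (∑ v : 𝒮 × G,
        -(prob μ (fun ω => (K ω, (S ω, K ω + K' ω))) (g, v) *
          Real.logb 2 (prob μ (fun ω => (K ω, (S ω, K ω + K' ω))) (g, v))))
        = (1/n) * Real.logb 2 n +
          (1/n) * ∑ s : 𝒮, ∑ k' : G, -(q k' s * Real.logb 2 (q k' s)) := by
      intro g
      rw [Fintype.sum_prod_type]
      have inner : ∀ s : 𝒮, (∑ m : G,
          -(prob μ (fun ω => (K ω, (S ω, K ω + K' ω))) (g, (s, m)) *
            Real.logb 2 (prob μ (fun ω => (K ω, (S ω, K ω + K' ω))) (g, (s, m)))))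
          = ∑ k' : G, ((1/n * Real.logb 2 n) * q k' s +
              (1/n) * -(q k' s * Real.logb 2 (q k' s))) := by
        intro s
        rw [Finset.sum_congr rfl (fun m _ => by
          rw [hJ g m s, phi_scale n _ hn1 (hq0 _ _)])]
        exact Fintype.sum_equiv (Equiv.subRight g)
          (fun m => 1/n * q (m - g) s * Real.logb 2 n + 1/n * -(q (m - g) s * Real.logb 2 (q (m - g) s)))
          (fun k => (1/n * Real.logb 2 n) * q k s + (1/n) * -(q k s * Real.logb 2 (q k s)))
          (fun m => by rw [Equiv.subRight_apply]; ring)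
      rw [Finset.sum_congr rfl (fun s _ => inner s)]
      simp only [Finset.sum_add_distrib, ← Finset.mul_sum]
      rw [hsum1, mul_one]
    rw [Finset.sum_congr rfl (fun g _ => step g)]
    rw [Finset.sum_const, Finset.card_univ, nsmul_eq_mul, ← hn]
    have hTR : (∑ x : G × 𝒮, -(prob μ (fun ω => (K' ω, S ω)) x *
        Real.logb 2 (prob μ (fun ω => (K' ω, S ω)) x)))
        = ∑ s : 𝒮, ∑ k' : G, -(q k' s * Real.logb 2 (q k' s)) := by
      rw [Fintype.sum_prod_type, Finset.sum_comm]
    rw [hTR]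
    field_simp
  have main : mutInf μ K (fun ω => (S ω, K ω + K' ω))
      = Real.logb 2 n - condEnt μ K' S := by
    unfold mutInf condEnt
    rw [entK, entSM, entJ]
    ring
  refine ⟨main, ?_⟩
  rw [main]
  unfold condEnt mutInf
  apply le_of_eq
  ring
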